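/- arXiv:2302.09714 — 3 statements merged into one kernel-verified Lean document; each statement's English description precedes it below -/
import Mathlib

section
/- Let E(t,u) and F(t,u) be smooth non-negative functions on [δ,t*]×[0,u*]. Suppose there exist positive constants A, B, C such that for all (t,u) in [δ,t*]×[0,u*], E(t,u) + F(t,u) ≤ A t² + B ∫₀ᵘ F(t,u') du' + C ∫_δ^t E(t',u)/t' dt'. If e^{B u*} C ≤ 1, then for all (t,u) in [δ,t*]×[0,u*], E(t,u) + F(t,u) ≤ 3 A e^{B u} t². -/
/-!
Let `M` be the maximum of `(E + F) / (3 A e^{B u} t²)` over the compact rectangle, attained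
at `(t₀, u₀)`. Feeding `E + F ≤ 3 M A e^{B u} t²` back into the hypothesis at `(t₀, u₀)`:
the `u`-integral contributes at most `3 M A t₀² (e^{B u₀} - 1)`, and since
`E(t', u₀) / t' ≤ 3 M A e^{B u₀} t'` and `C e^{B u₀} ≤ 1`, the `t`-integral contributes at most
`(3/2) M A t₀²`. Hence `3 M A e^{B u₀} t₀² ≤ A t₀² + 3 M A t₀² (e^{B u₀} - 1) + (3/2) M A t₀²`,
i.e. `M ≤ 2/3`.
-/

open Set Real MeasureTheory

theorem IsCompact.exists_forall_le_mul_of_pos {α : Type*} [TopologicalSpace α] {K : Set α}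
    (hK : IsCompact K) (hne : K.Nonempty) {f w : α → ℝ} (hf : ContinuousOn f K)
    (hw : ContinuousOn w K) (hw₀ : ∀ p ∈ K, 0 < w p) :
    ∃ M, ∃ p₀ ∈ K, f p₀ = M * w p₀ ∧ ∀ p ∈ K, f p ≤ M * w p := by
  obtain ⟨p₀, hp₀, hmax⟩ :=
    hK.exists_isMaxOn hne (hf.div hw fun p hp => (hw₀ p hp).ne')
  exact ⟨f p₀ / w p₀, p₀, hp₀, (div_mul_cancel₀ _ (hw₀ p₀ hp₀).ne').symm,
    fun p hp => (div_le_iff₀ (hw₀ p hp)).1 (hmax hp)⟩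

theorem mul_integral_le_of_le_mul_exp {f : ℝ → ℝ} {B c a b : ℝ} (hB : 0 ≤ B) (hab : a ≤ b)
    (hf : IntervalIntegrable f volume a b) (hle : ∀ x ∈ Icc a b, f x ≤ c * exp (B * x)) :
    B * ∫ x in a..b, f x ≤ c * (exp (B * b) - exp (B * a)) := by
  have hexp : ∫ x in a..b, B * exp (B * x) = exp (B * b) - exp (B * a) :=
    intervalIntegral.integral_eq_sub_of_hasDerivAt
      (fun x _ => by simpa [mul_comm] using ((hasDerivAt_id x).const_mul B).exp)
      ((by fun_prop : Continuous _).intervalIntegrable _ _)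
  calc B * ∫ x in a..b, f x ≤ B * ∫ x in a..b, c * exp (B * x) :=
        mul_le_mul_of_nonneg_left (intervalIntegral.integral_mono_on hab hf
          ((by fun_prop : Continuous _).intervalIntegrable _ _) hle) hB
    _ = c * (exp (B * b) - exp (B * a)) := by
        rw [← hexp, intervalIntegral.integral_const_mul, intervalIntegral.integral_const_mul]
        ring

theorem integral_div_le_of_le_mul_sq {g : ℝ → ℝ} {a b c : ℝ} (ha : 0 < a) (hab : a ≤ b)
    (hg : IntervalIntegrable (fun x => g x / x) volume a b)
    (hle : ∀ x ∈ Icc a b, g x ≤ c * x ^ 2) :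
    ∫ x in a..b, g x / x ≤ c * ((b ^ 2 - a ^ 2) / 2) := by
  calc ∫ x in a..b, g x / x ≤ ∫ x in a..b, c * x := by
        refine intervalIntegral.integral_mono_on hab hg
          ((by fun_prop : Continuous _).intervalIntegrable _ _) fun x hx => ?_
        rw [div_le_iff₀ (ha.trans_le hx.1)]
        linarith [hle x hx]
    _ = c * ((b ^ 2 - a ^ 2) / 2) := by rw [intervalIntegral.integral_const_mul, integral_id]

section Slices

variable {B K : ℝ} {E F : ℝ → ℝ → ℝ}

theorem mul_integral_slice_le_of_le_mul_exp {s : Set ℝ} {ustar t₀ u₀ : ℝ} (hB : 0 ≤ B)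
    (hF : ContinuousOn (fun p : ℝ × ℝ => F p.1 p.2) (s ×ˢ Icc 0 ustar))
    (hFb : ∀ u ∈ Icc 0 ustar, F t₀ u ≤ K * exp (B * u) * t₀ ^ 2)
    (ht₀ : t₀ ∈ s) (hu₀ : u₀ ∈ Icc 0 ustar) :
    B * ∫ u in (0:ℝ)..u₀, F t₀ u ≤ K * t₀ ^ 2 * (exp (B * u₀) - 1) := by
  have hsub : Icc 0 u₀ ⊆ Icc 0 ustar := Icc_subset_Icc le_rfl hu₀.2
  simpa only [mul_zero, exp_zero] using mul_integral_le_of_le_mul_exp hB hu₀.1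
    (((hF.uncurry_left t₀ ht₀).mono hsub).intervalIntegrable_of_Icc hu₀.1)
    fun u hu => (hFb u (hsub hu)).trans_eq (by ring)

theorem mul_integral_slice_div_le_of_le_mul_sq {s : Set ℝ} {C δ tstar t₀ u₀ : ℝ} (hδ : 0 < δ)
    (hK : 0 ≤ K) (hC : 0 ≤ C) (hCe : C * exp (B * u₀) ≤ 1)
    (hE : ContinuousOn (fun p : ℝ × ℝ => E p.1 p.2) (Icc δ tstar ×ˢ s))
    (hEb : ∀ t ∈ Icc δ tstar, E t u₀ ≤ K * exp (B * u₀) * t ^ 2)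
    (ht₀ : t₀ ∈ Icc δ tstar) (hu₀ : u₀ ∈ s) :
    C * ∫ t in δ..t₀, E t u₀ / t ≤ K * t₀ ^ 2 / 2 := by
  have hsub : Icc δ t₀ ⊆ Icc δ tstar := Icc_subset_Icc le_rfl ht₀.2
  have hint : ∫ t in δ..t₀, E t u₀ / t ≤ K * exp (B * u₀) * ((t₀ ^ 2 - δ ^ 2) / 2) :=
    integral_div_le_of_le_mul_sq hδ ht₀.1
      ((((hE.uncurry_right u₀ hu₀).div continuousOn_id fun t ht =>
        (hδ.trans_le ht.1).ne').mono hsub).intervalIntegrable_of_Icc ht₀.1)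
      fun t ht => hEb t (hsub ht)
  calc C * ∫ t in δ..t₀, E t u₀ / t
      ≤ C * (K * exp (B * u₀) * ((t₀ ^ 2 - δ ^ 2) / 2)) := mul_le_mul_of_nonneg_left hint hC
    _ ≤ K * t₀ ^ 2 / 2 * (C * exp (B * u₀)) := by
        have : 0 ≤ C * (K * exp (B * u₀) * δ ^ 2) := by positivity
        linarith
    _ ≤ K * t₀ ^ 2 / 2 := mul_le_of_le_one_right (by positivity) hCe

end Slices

theorem refined_gronwall_general
    (δ tstar ustar A B C : ℝ)
    (hδ : 0 < δ)
    (hA : 0 < A) (hB : 0 < B) (hC : 0 < C)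
    (E F : ℝ → ℝ → ℝ)
    (hEcont : ContinuousOn (fun p : ℝ × ℝ => E p.1 p.2) (Set.Icc δ tstar ×ˢ Set.Icc 0 ustar))
    (hFcont : ContinuousOn (fun p : ℝ × ℝ => F p.1 p.2) (Set.Icc δ tstar ×ˢ Set.Icc 0 ustar))
    (hEnn : ∀ t ∈ Set.Icc δ tstar, ∀ u ∈ Set.Icc 0 ustar, 0 ≤ E t u)
    (hFnn : ∀ t ∈ Set.Icc δ tstar, ∀ u ∈ Set.Icc 0 ustar, 0 ≤ F t u)
    (hmain : ∀ t ∈ Set.Icc δ tstar, ∀ u ∈ Set.Icc 0 ustar,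
      E t u + F t u ≤ A * t ^ 2 + B * (∫ u' in (0:ℝ)..u, F t u')
        + C * (∫ t' in δ..t, E t' u / t'))
    (hcond : Real.exp (B * ustar) * C ≤ 1) :
    ∀ t ∈ Set.Icc δ tstar, ∀ u ∈ Set.Icc 0 ustar,
      E t u + F t u ≤ 3 * A * Real.exp (B * u) * t ^ 2 := by
  intro t ht u hu
  have hw : ∀ p ∈ Icc δ tstar ×ˢ Icc 0 ustar, 0 < 3 * A * exp (B * p.2) * p.1 ^ 2 :=
    fun p hp => by have := hδ.trans_le hp.1.1; positivity
  obtain ⟨M, ⟨t₀, u₀⟩, ⟨ht₀, hu₀⟩, hM₀, hle⟩ :=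
    (isCompact_Icc.prod isCompact_Icc).exists_forall_le_mul_of_pos ⟨(t, u), ht, hu⟩
      (hEcont.add hFcont) (by fun_prop) hw
  dsimp only [Pi.add_apply] at ht₀ hu₀ hM₀ hle
  have hbound : ∀ t ∈ Icc δ tstar, ∀ u ∈ Icc 0 ustar,
      E t u + F t u ≤ 3 * M * A * exp (B * u) * t ^ 2 := fun t ht u hu =>
    (hle (t, u) ⟨ht, hu⟩).trans_eq (by ring)
  have hM : 0 ≤ M := nonneg_of_mul_nonneg_left
    (hM₀ ▸ add_nonneg (hEnn _ ht₀ _ hu₀) (hFnn _ ht₀ _ hu₀)) (hw (t₀, u₀) ⟨ht₀, hu₀⟩)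
  have hF := mul_integral_slice_le_of_le_mul_exp (K := 3 * M * A) hB.le hFcont
    (fun u hu => by linarith [hbound _ ht₀ _ hu, hEnn _ ht₀ _ hu]) ht₀ hu₀
  have hE := mul_integral_slice_div_le_of_le_mul_sq (K := 3 * M * A) hδ (by positivity) hC.le
    (by nlinarith [exp_le_exp.2 (mul_le_mul_of_nonneg_left hu₀.2 hB.le)]) hEcont
    (fun t ht => by linarith [hbound _ ht _ hu₀, hFnn _ ht _ hu₀]) ht₀ hu₀
  have hM1 : M ≤ 1 := by
    have hAt₀ : 0 < A * t₀ ^ 2 := by have := hδ.trans_le ht₀.1; positivity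
    nlinarith [hmain t₀ ht₀ u₀ hu₀]
  exact (hle (t, u) ⟨ht, hu⟩).trans (mul_le_of_le_one_left (hw _ ⟨ht, hu⟩).le hM1)

/-- Refined Gronwall-type inequality in two variables (Lemma on `refined Gronwall`). -/
theorem refined_gronwall
    (δ tstar ustar A B C : ℝ)
    (hδ : 0 < δ) (hts : δ ≤ tstar) (hus : 0 ≤ ustar)
    (hA : 0 < A) (hB : 0 < B) (hC : 0 < C)
    (E F : ℝ → ℝ → ℝ)
    (hEcont : ContinuousOn (fun p : ℝ × ℝ => E p.1 p.2) (Set.Icc δ tstar ×ˢ Set.Icc 0 ustar))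
    (hFcont : ContinuousOn (fun p : ℝ × ℝ => F p.1 p.2) (Set.Icc δ tstar ×ˢ Set.Icc 0 ustar))
    (hEnn : ∀ t ∈ Set.Icc δ tstar, ∀ u ∈ Set.Icc 0 ustar, 0 ≤ E t u)
    (hFnn : ∀ t ∈ Set.Icc δ tstar, ∀ u ∈ Set.Icc 0 ustar, 0 ≤ F t u)
    (hmain : ∀ t ∈ Set.Icc δ tstar, ∀ u ∈ Set.Icc 0 ustar,
      E t u + F t u ≤ A * t ^ 2 + B * (∫ u' in (0:ℝ)..u, F t u')
        + C * (∫ t' in δ..t, E t' u / t'))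
    (hcond : Real.exp (B * ustar) * C ≤ 1) :
    ∀ t ∈ Set.Icc δ tstar, ∀ u ∈ Set.Icc 0 ustar,
      E t u + F t u ≤ 3 * A * Real.exp (B * u) * t ^ 2 :=
  refined_gronwall_general δ tstar ustar A B C hδ hA hB hC E F hEcont hFcont hEnn hFnn hmain hcond
end

section
/- Let F and G be non-negative continuous functions on [δ, t*] with δ > 0, and let F₀ ≥ 0 be a constant. If for all t ∈ [δ, t*], F(t) ≤ F₀/t + (1/t)∫_δ^t F(τ) dτ + G(t), then for all t ∈ [δ, t*], F(t) ≤ F₀/δ + ∫_δ^t G(τ)/τ dτ + G(t). -/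
/-!
The hypothesis says `t (F - G) ≤ F₀ + ∫_δ^t F`. Hence the derivative of
`u ↦ (F₀ + ∫_δ^u F) / u - ∫_δ^u G(τ)/τ`, which is `(F - G - (F₀ + ∫_δ^u F)/u) / u`, is
nonpositive, so this function is bounded on `[δ, t*]` by its value `F₀/δ` at `δ`.
Plugging that bound back into the hypothesis gives the result.
-/

open Set MeasureTheory intervalIntegral

section Primitive

variable {E : Type*} [NormedAddCommGroup E] [NormedSpace ℝ E] {f : ℝ → E} {a b : ℝ}

theorem ContinuousOn.continuousOn_primitive_Icc
    (hf : ContinuousOn f (Icc a b)) :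
    ContinuousOn (fun u => ∫ τ in a..u, f τ) (Icc a b) :=
  (continuousOn_primitive hf.integrableOn_Icc).congr fun _ hx => integral_of_le hx.1

theorem ContinuousOn.hasDerivAt_primitive_of_mem_Ioo [CompleteSpace E] {x : ℝ}
    (hf : ContinuousOn f (Icc a b)) (hx : x ∈ Ioo a b) :
    HasDerivAt (fun u => ∫ τ in a..u, f τ) (f x) x :=
  integral_hasDerivAt_right
    ((hf.mono (Icc_subset_Icc_right hx.2.le)).intervalIntegrable_of_Icc hx.1.le)
    ((hf.mono Ioo_subset_Icc_self).stronglyMeasurableAtFilter isOpen_Ioo x hx)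
    (hf.continuousAt (Icc_mem_nhds hx.1 hx.2))

end Primitive

theorem antitoneOn_add_integral_div_sub_integral_div {F G : ℝ → ℝ} {a b C : ℝ} (ha : 0 < a)
    (hF : ContinuousOn F (Icc a b)) (hG : ContinuousOn G (Icc a b))
    (hFG : ∀ t ∈ Icc a b, F t ≤ (C + ∫ τ in a..t, F τ) / t + G t) :
    AntitoneOn (fun u => (C + ∫ τ in a..u, F τ) / u - ∫ τ in a..u, G τ / τ) (Icc a b) := by
  have hne : ∀ x ∈ Icc a b, x ≠ 0 := fun x hx => (ha.trans_le hx.1).ne'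
  have hGdiv : ContinuousOn (fun τ => G τ / τ) (Icc a b) := hG.div continuousOn_id hne
  refine antitoneOn_of_hasDerivWithinAt_nonpos (convex_Icc a b)
    (((continuousOn_const.add hF.continuousOn_primitive_Icc).div continuousOn_id hne).sub
      hGdiv.continuousOn_primitive_Icc)
    (f' := fun x => (F x * x - (C + ∫ τ in a..x, F τ)) / x ^ 2 - G x / x) ?_ ?_
  all_goals rw [interior_Icc]
  · intro x hx
    have hx0 : x ≠ 0 := hne x (Ioo_subset_Icc_self hx)
    exact ((((hasDerivAt_const x C).add (hF.hasDerivAt_primitive_of_mem_Ioo hx)).div (hasDerivAt_id x) hx0).sub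
      (hGdiv.hasDerivAt_primitive_of_mem_Ioo hx)).hasDerivWithinAt.congr_deriv (by simp)
  · intro x hx
    have hx0 : 0 < x := ha.trans hx.1
    have h : F x - G x ≤ (C + ∫ τ in a..x, F τ) / x :=
      sub_le_iff_le_add.mpr (hFG x (Ioo_subset_Icc_self hx))
    rw [le_div_iff₀ hx0] at h
    rw [sub_nonpos, div_le_div_iff₀ (by positivity) hx0]
    nlinarith

theorem gronwall_singular_general
    (δ tstar F₀ : ℝ) (hδ : 0 < δ) (hts : δ ≤ tstar)
    (F G : ℝ → ℝ)
    (hFcont : ContinuousOn F (Set.Icc δ tstar))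
    (hGcont : ContinuousOn G (Set.Icc δ tstar))
    (hmain : ∀ t ∈ Set.Icc δ tstar,
      F t ≤ F₀ / t + (1 / t) * (∫ τ in δ..t, F τ) + G t) :
    ∀ t ∈ Set.Icc δ tstar,
      F t ≤ F₀ / δ + (∫ τ in δ..t, G τ / τ) + G t := by
  have hFG : ∀ t ∈ Icc δ tstar, F t ≤ (F₀ + ∫ τ in δ..t, F τ) / t + G t := fun t ht => by
    simpa only [add_div, one_div_mul_eq_div] using hmain t ht
  intro t ht
  have hmono := antitoneOn_add_integral_div_sub_integral_div hδ hFcont hGcont hFG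
    (left_mem_Icc.mpr hts) ht ht.1
  simp only [integral_same, add_zero, sub_zero] at hmono
  linarith [hFG t ht]

/-- Gronwall-type inequality with singular weight 1/t. -/
theorem gronwall_singular
    (δ tstar F₀ : ℝ) (hδ : 0 < δ) (hts : δ ≤ tstar) (hF₀ : 0 ≤ F₀)
    (F G : ℝ → ℝ)
    (hFcont : ContinuousOn F (Set.Icc δ tstar))
    (hGcont : ContinuousOn G (Set.Icc δ tstar))
    (hFnn : ∀ t ∈ Set.Icc δ tstar, 0 ≤ F t)
    (hGnn : ∀ t ∈ Set.Icc δ tstar, 0 ≤ G t)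
    (hmain : ∀ t ∈ Set.Icc δ tstar,
      F t ≤ F₀ / t + (1 / t) * (∫ τ in δ..t, F τ) + G t) :
    ∀ t ∈ Set.Icc δ tstar,
      F t ≤ F₀ / δ + (∫ τ in δ..t, G τ / τ) + G t :=
  gronwall_singular_general δ tstar F₀ hδ hts F G hFcont hGcont hmain
end

section
/- Let χ : [δ,t*] → ℝ be C¹ and satisfy |χ'(t) − e(t)χ(t) + χ(t)²| ≤ Kε for all t, where |e(t)| ≤ Cε, and |χ(δ)| ≤ C₁ε. Suppose additionally that |χ(t)| ≤ 1 on [δ,t*] and t* ≤ 1. Then there is a constant C₂ depending only on K, C, C₁ such that |χ(t)| ≤ C₂ε for all t ∈ [δ,t*], provided ε is sufficiently small. -/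
/-!
Since `|χ| ≤ 1`, the quadratic term is dominated by the linear one, so the Riccati inequality
gives the linear differential inequality `|χ'| ≤ (C + 1)|χ| + Kε` once `ε ≤ 1`. Grönwall's
inequality on an interval of length at most `1` then bounds `|χ|` by the Grönwall bound with data
`C₁ε` and forcing `Kε`, which is `ε` times a constant depending only on `K`, `C`, `C₁`.
-/

open Set

theorem gronwallBound_mul_mul (c δ K ε x : ℝ) :
    gronwallBound (c * δ) K (c * ε) x = c * gronwallBound δ K ε x := by
  unfold gronwallBound
  split_ifs <;> ring

theorem abs_le_of_abs_riccati_le {x y e a b : ℝ} (hric : |y - e * x + x ^ 2| ≤ a)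
    (he : |e| ≤ b) (hx : |x| ≤ 1) : |y| ≤ (b + 1) * |x| + a := by
  have hsq : |x| ^ 2 ≤ |x| := by nlinarith [abs_nonneg x]
  calc |y| = |(y - e * x + x ^ 2) + e * x - x ^ 2| := by ring_nf
    _ ≤ |y - e * x + x ^ 2| + |e| * |x| + |x| ^ 2 := by
      grw [abs_sub, abs_add_le, abs_mul, abs_pow]
    _ ≤ a + b * |x| + |x| := by gcongr
    _ = (b + 1) * |x| + a := by ring

theorem abs_le_gronwallBound_of_riccati {χ χ' e : ℝ → ℝ} {a b c δ T : ℝ}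
    (hderiv : ∀ t ∈ Icc δ T, HasDerivAt χ (χ' t) t)
    (hric : ∀ t ∈ Icc δ T, |χ' t - e t * χ t + χ t ^ 2| ≤ a)
    (he : ∀ t ∈ Icc δ T, |e t| ≤ b) (hδ : |χ δ| ≤ c) (hχ : ∀ t ∈ Icc δ T, |χ t| ≤ 1) :
    ∀ t ∈ Icc δ T, |χ t| ≤ gronwallBound c (b + 1) a (t - δ) :=
  norm_le_gronwallBound_of_norm_deriv_right_le
    (fun t ht => (hderiv t ht).continuousAt.continuousWithinAt)
    (fun t ht => (hderiv t (Ico_subset_Icc_self ht)).hasDerivWithinAt) hδ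
    (fun t ht => abs_le_of_abs_riccati_le (hric t (Ico_subset_Icc_self ht))
      (he t (Ico_subset_Icc_self ht)) (hχ t (Ico_subset_Icc_self ht)))

/-- Riccati-type a priori estimate for the null second fundamental form `χ`:
the transport inequality `|χ' − eχ + χ²| ≤ Kε` with `|e| ≤ Cε`, small data
`|χ(δ)| ≤ C₁ε`, and the a priori bound `|χ| ≤ 1` yield `|χ| ≤ C₂ε`, for ε small. -/
theorem riccati_chi_bound
    (K C C₁ : ℝ) (hK : 0 < K) (hC : 0 < C) (hC₁ : 0 < C₁) :
    ∃ C₂ > 0, ∃ ε₀ > 0, ∀ ε : ℝ, 0 < ε → ε ≤ ε₀ →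
      ∀ δ tstar : ℝ, 0 < δ → δ ≤ tstar → tstar ≤ 1 →
      ∀ χ χ' e : ℝ → ℝ,
        (∀ t ∈ Set.Icc δ tstar, HasDerivAt χ (χ' t) t) →
        ContinuousOn χ' (Set.Icc δ tstar) →
        (∀ t ∈ Set.Icc δ tstar, |χ' t - e t * χ t + (χ t) ^ 2| ≤ K * ε) →
        (∀ t ∈ Set.Icc δ tstar, |e t| ≤ C * ε) →
        |χ δ| ≤ C₁ * ε →
        (∀ t ∈ Set.Icc δ tstar, |χ t| ≤ 1) →
        ∀ t ∈ Set.Icc δ tstar, |χ t| ≤ C₂ * ε := by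
  have hmono : Monotone (gronwallBound C₁ (C + 1) K) :=
    gronwallBound_mono hC₁.le hK.le (by positivity)
  have hC₂ : C₁ ≤ gronwallBound C₁ (C + 1) K 1 := by
    simpa only [gronwallBound_x0] using hmono zero_le_one
  refine ⟨gronwallBound C₁ (C + 1) K 1, hC₁.trans_le hC₂, 1, one_pos, ?_⟩
  intro ε hε hε₁ δ tstar hδ _ htstar χ χ' e hderiv _ hric he hχδ hχ t ht
  have he' : ∀ s ∈ Icc δ tstar, |e s| ≤ C := fun s hs =>
    (he s hs).trans (mul_le_of_le_one_right hC.le hε₁)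
  calc |χ t| ≤ gronwallBound (ε * C₁) (C + 1) (ε * K) (t - δ) := by
        rw [mul_comm ε, mul_comm ε]
        exact abs_le_gronwallBound_of_riccati hderiv hric he' hχδ hχ t ht
    _ = ε * gronwallBound C₁ (C + 1) K (t - δ) := gronwallBound_mul_mul ε C₁ (C + 1) K _
    _ ≤ ε * gronwallBound C₁ (C + 1) K 1 := by
        gcongr
        exact hmono (by linarith [ht.2])
    _ = gronwallBound C₁ (C + 1) K 1 * ε := mul_comm _ _
end
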